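/- arXiv:1505.07654 — 4 statements merged into one kernel-verified Lean document; each statement's English description precedes it below -/
import Mathlib

section
/- Let G be a group, H a subgroup, and S a right transversal of H in G containing the identity. Define an operation ∘ on S by letting x ∘ y be the unique element of S ∩ H x y. Then (S, ∘) has a two-sided identity (the identity of G) and for all a, b ∈ S the equation X ∘ a = b has a unique solution X in S. -/
section RightTransversal

variable {G : Type*} [Group G] {H : Subgroup G} {S : Set G} {op : S → S → S}

theorem transversalOp_eq_of_mul_inv_mem (huniq : ∀ g : G, ∃! s : G, s ∈ S ∧ g * s⁻¹ ∈ H)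
    (hop : ∀ x y : S, (x : G) * y * (op x y : G)⁻¹ ∈ H) {x y z : S}
    (h : (x : G) * y * (z : G)⁻¹ ∈ H) : op x y = z :=
  Subtype.ext <| (huniq _).unique ⟨(op x y).2, hop x y⟩ ⟨z.2, h⟩

theorem transversalOp_eq_iff (huniq : ∀ g : G, ∃! s : G, s ∈ S ∧ g * s⁻¹ ∈ H)
    (hop : ∀ x y : S, (x : G) * y * (op x y : G)⁻¹ ∈ H) {X a b : S} :
    op X a = b ↔ (b : G) * (a : G)⁻¹ * (X : G)⁻¹ ∈ H := by
  have hinv : ((X : G) * a * (b : G)⁻¹)⁻¹ = b * (a : G)⁻¹ * (X : G)⁻¹ := by group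
  constructor
  · rintro rfl
    rw [← hinv]
    exact H.inv_mem (hop X a)
  · intro h
    apply transversalOp_eq_of_mul_inv_mem huniq hop
    rwa [← H.inv_mem_iff, hinv]

/-- The solution of `X ∘ a = b` is the representative of the coset `H b a⁻¹`. -/
theorem existsUnique_transversalOp_eq (huniq : ∀ g : G, ∃! s : G, s ∈ S ∧ g * s⁻¹ ∈ H)
    (hop : ∀ x y : S, (x : G) * y * (op x y : G)⁻¹ ∈ H) (a b : S) :
    ∃! X : S, op X a = b := by
  obtain ⟨s, ⟨hsS, hs⟩, hs_unique⟩ := huniq ((b : G) * (a : G)⁻¹)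
  refine ⟨⟨s, hsS⟩, (transversalOp_eq_iff huniq hop).2 hs, fun X hX => ?_⟩
  exact Subtype.ext (hs_unique X ⟨X.2, (transversalOp_eq_iff huniq hop).1 hX⟩)

end RightTransversal

/-- A right transversal `S` of `H` in `G` containing the identity,
with the induced operation `∘` (defined by `{x ∘ y} = S ∩ Hxy`), has a two-sided
identity and unique right division. -/
theorem stmt0 {G : Type*} [Group G] (H : Subgroup G) (S : Set G)
    (h1 : (1 : G) ∈ S)
    (huniq : ∀ g : G, ∃! s : G, s ∈ S ∧ g * s⁻¹ ∈ H)
    (op : S → S → S)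
    (hop : ∀ x y : S, ((x : G) * (y : G)) * ((op x y : G))⁻¹ ∈ H) :
    (∀ x : S, op x ⟨1, h1⟩ = x ∧ op ⟨1, h1⟩ x = x) ∧
      (∀ a b : S, ∃! X : S, op X a = b) :=
  ⟨fun _ => ⟨transversalOp_eq_of_mul_inv_mem huniq hop (by simp),
      transversalOp_eq_of_mul_inv_mem huniq hop (by simp)⟩,
    existsUnique_transversalOp_eq huniq hop⟩
end

section
/- Let G be a finite group and H a core-free subgroup contained in a normal subgroup N of G such that the index of H in N is 2. Then N is an elementary abelian 2-group, i.e., N is abelian and every element of N has order dividing 2. -/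
namespace Subgroup

variable {G : Type*} [Group G] {H N : Subgroup G}

theorem sq_mem_of_relIndex_eq_two (h : H.relIndex N = 2) {a : G} (ha : a ∈ N) : a ^ 2 ∈ H := by
  simpa [mem_subgroupOf] using sq_mem_of_index_two h ⟨a, ha⟩

/-- Every conjugate of `a ∈ N` lies in `N`, so its square lies in `H`. -/
theorem sq_mem_normalCore_of_relIndex_eq_two (hN : N.Normal) (h : H.relIndex N = 2) {a : G}
    (ha : a ∈ N) : a ^ 2 ∈ H.normalCore := fun g => by
  simpa [conj_pow] using sq_mem_of_relIndex_eq_two h (hN.conj_mem a ha g)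

theorem commute_of_forall_sq_eq_one (hsq : ∀ a ∈ N, a ^ 2 = 1) {a b : G} (ha : a ∈ N)
    (hb : b ∈ N) : Commute a b := by
  have hN : ∀ x : N, orderOf x ∣ 2 := fun x =>
    orderOf_dvd_of_pow_eq_one (Subtype.ext (hsq x x.2))
  exact congrArg Subtype.val (Commute.of_orderOf_dvd_two hN ⟨a, ha⟩ ⟨b, hb⟩).eq

end Subgroup

theorem stmt6_general {G : Type*} [Group G] (H N : Subgroup G)
    (hN : N.Normal)
    (hcf : H.normalCore = ⊥)
    (hindex : H.relIndex N = 2) :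
    (∀ a ∈ N, ∀ b ∈ N, a * b = b * a) ∧ (∀ a ∈ N, a ^ 2 = 1) := by
  have hsq : ∀ a ∈ N, a ^ 2 = 1 := fun a ha => by
    simpa [hcf] using Subgroup.sq_mem_normalCore_of_relIndex_eq_two hN hindex ha
  exact ⟨fun a ha b hb => (Subgroup.commute_of_forall_sq_eq_one hsq ha hb).eq, hsq⟩

/-- If `G` is finite, `H` is core-free and contained in a normal
subgroup `N` with `[N : H] = 2`, then `N` is an elementary abelian 2-group. -/
theorem stmt6 {G : Type*} [Group G] [Finite G] (H N : Subgroup G)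
    (hHN : H ≤ N) (hN : N.Normal)
    (hcf : H.normalCore = ⊥)
    (hindex : H.relIndex N = 2) :
    (∀ a ∈ N, ∀ b ∈ N, a * b = b * a) ∧ (∀ a ∈ N, a ^ 2 = 1) :=
  stmt6_general H N hN hcf hindex
end

section
/- Let S be a finite right loop (a finite set with binary operation ∘, two-sided identity 1, and unique right division) with a two-element invariant sub right loop T = {1, t} such that the quotient S/T is a group. Then for all x, y, z ∈ S, either f(y,z)(x) = x or f(y,z)(x) = t ∘ x, where f(y,z)(x) is the unique solution of X ∘ (y ∘ z) = (x ∘ y) ∘ z. -/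
/-!
Since `S/T` is associative, `(x ∘ y) ∘ z` and `x ∘ (y ∘ z)` lie in the same class, so
`f(y,z)(x) ∘ c ∈ {x ∘ c, t ∘ (x ∘ c)}` with `c = y ∘ z`. The same argument puts `(t ∘ x) ∘ c` in
the class of `x ∘ c`, and it cannot equal `x ∘ c` because `t ≠ 1`; hence
`(t ∘ x) ∘ c = t ∘ (x ∘ c)`, and right cancellation gives `f(y,z)(x) ∈ {x, t ∘ x}`.
-/

section RightLoop

variable {S : Type*} {op : S → S → S}

theorem right_cancel_of_existsUnique_div (hdiv : ∀ a b : S, ∃! x, op x a = b) {a b c : S}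
    (h : op a c = op b c) : a = b :=
  (hdiv c (op b c)).unique h rfl

theorem op_ne_self_of_ne_one (hdiv : ∀ a b : S, ∃! x, op x a = b) {one t : S}
    (hleft : ∀ x, op one x = x) (ht : t ≠ one) (x : S) : op t x ≠ x := fun h =>
  ht (right_cancel_of_existsUnique_div hdiv (h.trans (hleft x).symm))

variable {t : S} {Tc : S → Set S}

theorem eq_or_eq_op_of_mem_class (hTc : ∀ x, Tc x = {x, op t x}) {x y : S} (h : y ∈ Tc x) :
    y = x ∨ y = op t x := by
  rwa [hTc] at h

theorem mem_class_op_assoc (hTc : ∀ x, Tc x = {x, op t x})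
    (hgrp : ∀ x y z, Tc (op x (op y z)) = Tc (op (op x y) z)) (x y z : S) :
    op (op x y) z ∈ Tc (op x (op y z)) := by
  rw [hgrp, hTc]
  exact Set.mem_insert _ _

theorem op_left_translate_assoc (hdiv : ∀ a b : S, ∃! x, op x a = b) {one : S}
    (hleft : ∀ x, op one x = x) (ht : t ≠ one) (hTc : ∀ x, Tc x = {x, op t x})
    (hclass : ∀ x y, y ∈ Tc x → Tc y = Tc x)
    (hgrp : ∀ x y z, Tc (op x (op y z)) = Tc (op (op x y) z)) (x c : S) :
    op (op t x) c = op t (op x c) := by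
  have hshift : Tc (op t (op x c)) = Tc (op x c) :=
    hclass _ _ (by rw [hTc]; exact Set.mem_insert_of_mem _ rfl)
  have hmem : op (op t x) c ∈ Tc (op x c) := hshift ▸ mem_class_op_assoc hTc hgrp t x c
  refine (eq_or_eq_op_of_mem_class hTc hmem).resolve_left fun h => ?_
  exact op_ne_self_of_ne_one hdiv hleft ht x (right_cancel_of_existsUnique_div hdiv h)

end RightLoop

theorem stmt12_general {S : Type*} (op : S → S → S) (one t : S)
    (hone : ∀ x : S, op x one = x ∧ op one x = x)
    (hdiv : ∀ a b : S, ∃! x : S, op x a = b)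
    (ht : t ≠ one)
    (Tc : S → Set S) (hTc : ∀ x : S, Tc x = {x, op t x})
    (hclass : ∀ x y : S, y ∈ Tc x → Tc y = Tc x)
    (hgrp : ∀ x y z : S, Tc (op x (op y z)) = Tc (op (op x y) z))
    (f : S → S → S → S)
    (hf : ∀ y z x : S, op (f y z x) (op y z) = op (op x y) z) :
    ∀ y z x : S, f y z x = x ∨ f y z x = op t x := by
  intro y z x
  have hleft : ∀ x, op one x = x := fun x => (hone x).2
  have hmem : op (f y z x) (op y z) ∈ Tc (op x (op y z)) :=
    hf y z x ▸ mem_class_op_assoc hTc hgrp x y z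
  rcases eq_or_eq_op_of_mem_class hTc hmem with h | h
  · exact Or.inl (right_cancel_of_existsUnique_div hdiv h)
  · rw [← op_left_translate_assoc hdiv hleft ht hTc hclass hgrp] at h
    exact Or.inr (right_cancel_of_existsUnique_div hdiv h)

/-- If a finite right loop `S` has a two-element invariant sub
right loop `T = {1, t}` (the classes `T ∘ x = {x, t ∘ x}` form a congruence)
such that the quotient `S/T` is a group (in particular associative), then for
all `x, y, z`, `f(y,z)(x)` is `x` or `t ∘ x`, where `f(y,z)(x)` is the unique
solution of `X ∘ (y∘z) = (x∘y)∘z`. -/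
theorem stmt12 {S : Type*} [Fintype S] (op : S → S → S) (one t : S)
    (hone : ∀ x : S, op x one = x ∧ op one x = x)
    (hdiv : ∀ a b : S, ∃! x : S, op x a = b)
    (ht : t ≠ one) (htt : op t t = one)
    (Tc : S → Set S) (hTc : ∀ x : S, Tc x = {x, op t x})
    (hclass : ∀ x y : S, y ∈ Tc x → Tc y = Tc x)
    (hcong : ∀ x x' y y' : S, Tc x = Tc x' → Tc y = Tc y' →
      Tc (op x y) = Tc (op x' y'))
    (hgrp : ∀ x y z : S, Tc (op x (op y z)) = Tc (op (op x y) z))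
    (f : S → S → S → S)
    (hf : ∀ y z x : S, op (f y z x) (op y z) = op (op x y) z) :
    ∀ y z x : S, f y z x = x ∨ f y z x = op t x :=
  stmt12_general op one t hone hdiv ht Tc hTc hclass hgrp f hf
end

section
/- Let S be a finite right loop with a two-element invariant sub right loop T = {1, t} such that S/T is a group. Then each map f(y,z) (where f(y,z)(x) solves X ∘ (y∘z) = (x∘y)∘z) is a product of disjoint transpositions of the form (x, t ∘ x); in particular f(y,z)² is the identity permutation of S. -/
/-! Right division makes right multiplication injective, and the class condition forces
`(t ∘ x) ∘ w = t ∘ (x ∘ w)`, so `t ∘ -` is an involution without fixed points commuting with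
right multiplication. Since `S/T` is a group, `f(y,z)(x)` lies in the class `{x, t ∘ x}`, and as
`f(y,z)` is injective it cannot send both `x` and `t ∘ x` to `t ∘ x`. -/

open Function

section RightLoop

variable {S : Type*} {op : S → S → S} {t : S}

lemma injective_op_right_of_existsUnique (hdiv : ∀ a b : S, ∃! x : S, op x a = b) (c : S) :
    Injective (op · c) :=
  fun _ b h => (hdiv c (op b c)).unique h rfl

lemma op_ne_self_of_ne_one_s13 {one : S} (hcancel : ∀ c, Injective (op · c))
    (hone : ∀ x, op one x = x) (ht : t ≠ one) (x : S) : op t x ≠ x :=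
  fun h => ht (hcancel x (h.trans (hone x).symm))

variable {Tc : S → Set S}

lemma op_t_op_assoc (hcancel : ∀ c, Injective (op · c)) (htx : ∀ x, op t x ≠ x)
    (hTc : ∀ x, Tc x = {x, op t x}) (hTt : ∀ x, Tc (op t x) = Tc x)
    (hcong : ∀ x x' y y' : S, Tc x = Tc x' → Tc y = Tc y' → Tc (op x y) = Tc (op x' y'))
    (x w : S) : op (op t x) w = op t (op x w) := by
  have hmem : op (op t x) w ∈ Tc (op x w) := by
    rw [← hcong _ _ _ _ (hTt x) rfl, hTc]
    exact Or.inl rfl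
  rw [hTc] at hmem
  rcases hmem with h | h
  · exact absurd (hcancel w h) (htx x)
  · exact h

lemma op_t_op_t_eq_self {one : S} (hone : ∀ x, op one x = x) (htt : op t t = one)
    (hassoc : ∀ x w, op (op t x) w = op t (op x w)) (x : S) : op t (op t x) = x := by
  rw [← hassoc, htt, hone]

end RightLoop

section Solution

variable {S : Type*} {op : S → S → S} {f : S → S → S → S}

lemma injective_solution (hcancel : ∀ c, Injective (op · c))
    (hf : ∀ y z x : S, op (f y z x) (op y z) = op (op x y) z) (y z : S) :
    Injective (f y z) := by
  intro a b h
  have hab : op (op a y) z = op (op b y) z := by rw [← hf, ← hf, h]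
  exact hcancel y (hcancel z hab)

variable {t : S} {Tc : S → Set S}

lemma solution_eq_self_or_eq_op_t (hcancel : ∀ c, Injective (op · c))
    (hassoc : ∀ x w, op (op t x) w = op t (op x w)) (hTc : ∀ x, Tc x = {x, op t x})
    (hgrp : ∀ x y z : S, Tc (op x (op y z)) = Tc (op (op x y) z))
    (hf : ∀ y z x : S, op (f y z x) (op y z) = op (op x y) z) (y z x : S) :
    f y z x = x ∨ f y z x = op t x := by
  have hmem : op (f y z x) (op y z) ∈ Tc (op x (op y z)) := by
    rw [hgrp, hf, hTc]
    exact Or.inl rfl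
  rw [hTc, ← hassoc] at hmem
  exact hmem.imp (hcancel _ ·) (hcancel _ ·)

end Solution

theorem stmt13_general {S : Type*} (op : S → S → S) (one t : S)
    (hone : ∀ x : S, op x one = x ∧ op one x = x)
    (hdiv : ∀ a b : S, ∃! x : S, op x a = b)
    (ht : t ≠ one) (htt : op t t = one)
    (Tc : S → Set S) (hTc : ∀ x : S, Tc x = {x, op t x})
    (hclass : ∀ x y : S, y ∈ Tc x → Tc y = Tc x)
    (hcong : ∀ x x' y y' : S, Tc x = Tc x' → Tc y = Tc y' →
      Tc (op x y) = Tc (op x' y'))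
    (hgrp : ∀ x y z : S, Tc (op x (op y z)) = Tc (op (op x y) z))
    (f : S → S → S → S)
    (hf : ∀ y z x : S, op (f y z x) (op y z) = op (op x y) z) :
    (∀ y z x : S, f y z x = x ∨ (f y z x = op t x ∧ f y z (op t x) = x)) ∧
    (∀ y z x : S, f y z (f y z x) = x) := by
  have hcancel := injective_op_right_of_existsUnique hdiv
  have htx := op_ne_self_of_ne_one_s13 hcancel (fun x => (hone x).2) ht
  have hTt : ∀ x, Tc (op t x) = Tc x := fun x => hclass x _ (by rw [hTc]; exact Or.inr rfl)
  have hassoc := op_t_op_assoc hcancel htx hTc hTt hcong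
  have hinv := op_t_op_t_eq_self (fun x => (hone x).2) htt hassoc
  have hcases := solution_eq_self_or_eq_op_t hcancel hassoc hTc hgrp hf
  have hswap : ∀ y z x, f y z x = op t x → f y z (op t x) = x := by
    intro y z x h
    have hne : f y z (op t x) ≠ op t x := fun h' =>
      htx x (injective_solution hcancel hf y z (h'.trans h.symm))
    rw [(hcases y z (op t x)).resolve_left hne, hinv]
  have hpart : ∀ y z x, f y z x = x ∨ (f y z x = op t x ∧ f y z (op t x) = x) :=
    fun y z x => (hcases y z x).imp_right fun h => ⟨h, hswap y z x h⟩
  refine ⟨hpart, fun y z x => ?_⟩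
  rcases hpart y z x with h | ⟨h, h'⟩
  · rw [h, h]
  · rw [h, h']

/-- Same setup as Statement 12: each `f(y,z)` is a product of
disjoint transpositions of the form `(x, t ∘ x)`; in particular `f(y,z)² = id`. -/
theorem stmt13 {S : Type*} [Fintype S] (op : S → S → S) (one t : S)
    (hone : ∀ x : S, op x one = x ∧ op one x = x)
    (hdiv : ∀ a b : S, ∃! x : S, op x a = b)
    (ht : t ≠ one) (htt : op t t = one)
    (Tc : S → Set S) (hTc : ∀ x : S, Tc x = {x, op t x})
    (hclass : ∀ x y : S, y ∈ Tc x → Tc y = Tc x)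
    (hcong : ∀ x x' y y' : S, Tc x = Tc x' → Tc y = Tc y' →
      Tc (op x y) = Tc (op x' y'))
    (hgrp : ∀ x y z : S, Tc (op x (op y z)) = Tc (op (op x y) z))
    (f : S → S → S → S)
    (hf : ∀ y z x : S, op (f y z x) (op y z) = op (op x y) z) :
    (∀ y z x : S, f y z x = x ∨ (f y z x = op t x ∧ f y z (op t x) = x)) ∧
    (∀ y z x : S, f y z (f y z x) = x) :=
  stmt13_general op one t hone hdiv ht htt Tc hTc hclass hcong hgrp f hf
end
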